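/- arXiv:math/0012227 — 4 statements merged into one kernel-verified Lean document; each statement's English description precedes it below -/
import Mathlib

section
/- Let 𝒦, 𝒫, ℋ be the operators on ℂ[[v]] defined by 𝒦(φ) = φ', 𝒫(φ) = φ·g with g = ∑_{j≥0} a^{j+1}(2κ)^{-j} vʲ, and ℋ(φ) = φ·h with h = b·1 - 2κ·∑_{j≥1} (1/j)(a/(2κ))ʲ vʲ (the formal series for b + 2κ·log(1 - av/(2κ))). Then ℋ commutes with 𝒫, and 𝒦∘ℋ - ℋ∘𝒦 = -𝒫 on ℂ[[v]]. -/
open PowerSeries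

/-- With `Kop = d/dv`, `Pop = ` multiplication by `g = ∑ a^{j+1} (2κ)^{-j} vʲ` and
`Hop = ` multiplication by `h = b - 2κ·∑_{j≥1} (1/j)(a/(2κ))ʲ vʲ` on `ℂ[[v]]`,
one has `[Hop, Pop] = 0` and `Kop∘Hop - Hop∘Kop = -Pop`. -/
theorem stmt_4 (a b κ : ℂ) (hκ : κ ≠ 0) :
    let g : PowerSeries ℂ := PowerSeries.mk fun j => a ^ (j + 1) * (2 * κ)⁻¹ ^ j
    let h : PowerSeries ℂ := PowerSeries.mk fun j =>
      if j = 0 then b else -(2 * κ) * (1 / (j : ℂ)) * (a / (2 * κ)) ^ j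
    let Pop : PowerSeries ℂ → PowerSeries ℂ := fun φ => φ * g
    let Hop : PowerSeries ℂ → PowerSeries ℂ := fun φ => φ * h
    let Kop : PowerSeries ℂ → PowerSeries ℂ := fun φ => PowerSeries.derivative ℂ φ
    (∀ φ : PowerSeries ℂ, Hop (Pop φ) - Pop (Hop φ) = 0) ∧
    (∀ φ : PowerSeries ℂ, Kop (Hop φ) - Hop (Kop φ) = -Pop φ) := by
  intro g h Pop Hop Kop
  have h2κ : (2 : ℂ) * κ ≠ 0 := by
    simp [hκ]
  have hdh : PowerSeries.derivative ℂ h = -g := by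
    ext n
    rw [PowerSeries.coeff_derivative]
    simp only [h, g, PowerSeries.coeff_mk, map_neg, Nat.add_one_ne_zero, if_false, Nat.cast_add_one]
    have hn : (n : ℂ) + 1 ≠ 0 := Nat.cast_add_one_ne_zero n
    field_simp
    linear_combination (-(a * a ^ n * κ⁻¹ ^ n * (1 / 2) ^ n)) * mul_inv_cancel₀ hκ
  constructor
  · intro φ
    simp only [Pop, Hop]
    ring
  · intro φ
    simp only [Pop, Hop, Kop]
    rw [Derivation.leibniz, hdh]
    simp only [smul_eq_mul]
    ring
end

section
/- Let X = (multiplication by x), T = (multiplication by t), ∂ₓ, ∂ₜ be operators on the polynomial ring ℂ[x,t], and fix scalars c and nonzero κ. Define K = c·id - T∘∂ₓ + (1/(2κ))·X∘∂ₓ², P = ∂ₓ, H = ∂ₜ. Then [H, K] = -P, [P, K] = (1/(2κ))·P², and [H, P] = 0 as operators on ℂ[x,t]. -/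
open MvPolynomial

/-- On `ℂ[x,t]` (variable `0 = x`, `1 = t`), with
`K = c·id - T∘∂ₓ + (1/(2κ))·X∘∂ₓ²`, `P = ∂ₓ`, `H = ∂ₜ`, one has
`[H,K] = -P`, `[P,K] = (1/(2κ))·P²`, `[H,P] = 0`. -/
theorem stmt_5 (c κ : ℂ) (hκ : κ ≠ 0) :
    let dx : MvPolynomial (Fin 2) ℂ → MvPolynomial (Fin 2) ℂ := fun φ => pderiv 0 φ
    let dt : MvPolynomial (Fin 2) ℂ → MvPolynomial (Fin 2) ℂ := fun φ => pderiv 1 φ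
    let K : MvPolynomial (Fin 2) ℂ → MvPolynomial (Fin 2) ℂ := fun φ =>
      c • φ - X 1 * dx φ + (1 / (2 * κ)) • (X 0 * dx (dx φ))
    let P := dx
    let H := dt
    (∀ φ, H (K φ) - K (H φ) = -P φ) ∧
    (∀ φ, P (K φ) - K (P φ) = (1 / (2 * κ)) • P (P φ)) ∧
    (∀ φ, H (P φ) - P (H φ) = 0) := by
  intro dx dt K P H
  have hcomm : ∀ φ : MvPolynomial (Fin 2) ℂ,
      pderiv (1 : Fin 2) (pderiv 0 φ) = pderiv 0 (pderiv 1 φ) := by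
    intro φ
    induction φ using MvPolynomial.induction_on with
    | C a => simp
    | add p q hp hq => simp [hp, hq]
    | mul_X p i hp =>
      fin_cases i <;> simp [pderiv_mul, hp, pderiv_X_self, pderiv_X_of_ne] <;> ring
  refine ⟨fun φ => ?_, fun φ => ?_, fun φ => ?_⟩ <;>
    simp only [K, P, H, dx, dt, map_sub, map_add, pderiv_mul, Derivation.map_smul,
      smul_eq_mul, hcomm] <;>
    simp [pderiv_X_self, pderiv_X_of_ne, pderiv_mul, hcomm, mul_smul_comm, smul_sub, smul_add,
      Fin.ext_iff] <;>
    ring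
end

section
/- Let V = (multiplication by v), X = (multiplication by x), T = (multiplication by t), ∂ᵥ, ∂ₓ, ∂ₜ be the standard operators on ℂ[v,x,t]. Define K = ∂ᵥ + (1/(2κ))·X∘∂ₓ² - T∘∂ₓ, P = ∂ₓ, H = ∂ₜ. Then these operators satisfy [H, K] = -P, [P, K] = (1/(2κ))·P², [H, P] = 0. -/
open MvPolynomial

lemma pderiv_comm' (i j : Fin 3) (p : MvPolynomial (Fin 3) ℂ) :
    pderiv i (pderiv j p) = pderiv j (pderiv i p) := by
  induction p using MvPolynomial.induction_on with
  | C a => simp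
  | add p q hp hq => simp [hp, hq]
  | mul_X p n hp =>
      simp only [pderiv_mul, map_add, hp, pderiv_X, Pi.single_apply]
      split_ifs <;> simp <;> ring

/-- On `ℂ[v,x,t]` (variables `0 = v`, `1 = x`, `2 = t`), with
`K = ∂ᵥ + (1/(2κ))·X∘∂ₓ² - T∘∂ₓ`, `P = ∂ₓ`, `H = ∂ₜ`, one has
`[H,K] = -P`, `[P,K] = (1/(2κ))·P²`, `[H,P] = 0`. -/
theorem stmt_6 (κ : ℂ) (hκ : κ ≠ 0) :
    let dv : MvPolynomial (Fin 3) ℂ → MvPolynomial (Fin 3) ℂ := fun φ => pderiv 0 φ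
    let dx : MvPolynomial (Fin 3) ℂ → MvPolynomial (Fin 3) ℂ := fun φ => pderiv 1 φ
    let dt : MvPolynomial (Fin 3) ℂ → MvPolynomial (Fin 3) ℂ := fun φ => pderiv 2 φ
    let K : MvPolynomial (Fin 3) ℂ → MvPolynomial (Fin 3) ℂ := fun φ =>
      dv φ + (1 / (2 * κ)) • (X 1 * dx (dx φ)) - X 2 * dx φ
    let P := dx
    let H := dt
    (∀ φ, H (K φ) - K (H φ) = -P φ) ∧
    (∀ φ, P (K φ) - K (P φ) = (1 / (2 * κ)) • P (P φ)) ∧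
    (∀ φ, H (P φ) - P (H φ) = 0) := by
  intro dv dx dt K P H
  have h12 : pderiv (2 : Fin 3) (X (1 : Fin 3) : MvPolynomial (Fin 3) ℂ) = 0 :=
    pderiv_X_of_ne (by decide)
  have h21 : pderiv (1 : Fin 3) (X (2 : Fin 3) : MvPolynomial (Fin 3) ℂ) = 0 :=
    pderiv_X_of_ne (by decide)
  have hs : ∀ (i : Fin 3) (c : ℂ) (p : MvPolynomial (Fin 3) ℂ),
      pderiv i (c • p) = c • pderiv i p := fun i c p => (pderiv i).map_smul c p
  refine ⟨fun φ => ?_, fun φ => ?_, fun φ => ?_⟩ <;>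
    simp only [dv, dx, dt, K, P, H, map_add, map_sub, map_smul, hs, pderiv_mul, h12, h21,
      pderiv_X_self, smul_add, smul_sub, smul_zero, zero_mul, mul_zero, add_zero, zero_add, pderiv_comm' 2 0, pderiv_comm' 2 1, pderiv_comm' 1 0] <;>
    ring
end

section
/- On the polynomial ring ℂ[φ, a₋, a₊] define operators: 𝒦 acting on monomials by 𝒦(φ^q a₋^r a₊^s) = q·φ^{q-1} a₋^r a₊^s + 2r·φ^q a₋^r a₊^s + (1/z)·φ^q a₋^r a₊·((a₊ - 2z)^s - a₊^s), 𝒫₋ = ∂/∂a₋, and 𝒫₊ = ∂/∂a₊. Then [𝒦, 𝒫₋] = -2𝒫₋ as operators on ℂ[φ, a₋, a₊]. -/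
open MvPolynomial

lemma pderiv_swap (f : MvPolynomial (Fin 3) ℂ) (i j : Fin 3) :
    pderiv i (pderiv j f) = pderiv j (pderiv i f) := by
  induction f using MvPolynomial.induction_on with
  | C a => simp
  | add p q hp hq => simp [hp, hq]
  | mul_X p k hp =>
    simp only [pderiv_mul, map_add, pderiv_X, hp]
    fin_cases i <;> fin_cases j <;> fin_cases k <;>
      simp [Pi.single_apply]

lemma pderiv_one_S (z : ℂ) (f : MvPolynomial (Fin 3) ℂ) :
    pderiv 1 (aeval (fun i : Fin 3 => if i = 2 then X 2 - C (2 * z) else X i) f)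
      = aeval (fun i : Fin 3 => if i = 2 then X 2 - C (2 * z) else X i) (pderiv 1 f) := by
  induction f using MvPolynomial.induction_on with
  | C a => simp [-aeval_eq_bind₁]
  | add p q hp hq => simp only [map_add, hp, hq]
  | mul_X p k hp =>
    simp only [C_mul] at hp
    fin_cases k <;>
      simp [-aeval_eq_bind₁, pderiv_mul, hp, pderiv_X_of_ne, pderiv_X, Pi.single_apply]

/-- On `ℂ[φ, a₋, a₊]` (variables `0 = φ`, `1 = a₋`, `2 = a₊`), with
`𝒦 = ∂_φ + 2·A₋∘∂_{a₋} + (1/z)·A₊∘(S_{-2z} - id)` (where `S_{-2z}` substitutes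
`a₊ ↦ a₊ - 2z`) and `𝒫₋ = ∂_{a₋}`, one has `[𝒦, 𝒫₋] = -2𝒫₋`. -/
theorem stmt_7 (z : ℂ) (hz : z ≠ 0) :
    let S : MvPolynomial (Fin 3) ℂ → MvPolynomial (Fin 3) ℂ := fun f =>
      aeval (fun i : Fin 3 => if i = 2 then X 2 - C (2 * z) else X i) f
    let Kop : MvPolynomial (Fin 3) ℂ → MvPolynomial (Fin 3) ℂ := fun f =>
      pderiv 0 f + 2 • (X 1 * pderiv 1 f) + (1 / z) • (X 2 * (S f - f))
    let Pm : MvPolynomial (Fin 3) ℂ → MvPolynomial (Fin 3) ℂ := fun f => pderiv 1 f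
    ∀ f, Kop (Pm f) - Pm (Kop f) = -2 • Pm f := by
  intro S Kop Pm f
  simp only [S, Kop, Pm, map_add, Derivation.map_smul, map_nsmul, pderiv_mul, map_sub,
    pderiv_one_S z f, pderiv_swap f 1 0, pderiv_X_self, one_mul,
    pderiv_X_of_ne (show (2 : Fin 3) ≠ 1 by decide), zero_mul]
  module
end
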